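/- arXiv:1703.02356 — 3 statements merged into one kernel-verified Lean document; each statement's English description precedes it below -/
import Mathlib

section
/- Let K = F_{q^m} ⊇ F = F_q with m prime not dividing q - 1. Then the number of orbits of the action on K \ F generated by the Frobenius σ(a) = a^q together with scalar multiplication by F^× equals (q^m - q)/(m(q - 1)); equivalently, every orbit {k·σ^i(a) : 0 ≤ i ≤ m-1, k ∈ F^×} has exactly m(q-1) elements. -/
/-! The group `Fˣ × ⟨σ⟩`, of order `m (q - 1)`, acts freely on `K \ F` by `a ↦ k σ^i(a)`.
Indeed, if `k σ^i(a) = k' σ^j(a)` with `i < j`, then `a` is an eigenvector of `σ^(j-i)`, which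
generates `Gal(K/F)` since `m` is prime; its eigenvalue `e ∈ F` satisfies `e^m = 1 = e^(q-1)`, so
`e = 1`, hence `a` is fixed by `σ` and lies in `F`. So every orbit has `m (q - 1)` elements, and
the `q^m - q` elements of `K \ F` fall into `(q^m - q) / (m (q - 1))` orbits. -/

open Function Polynomial Fintype

theorem Equivalence.card_eq_card_quot_mul {α : Type*} [Finite α] {r : α → α → Prop}
    (hr : Equivalence r) {n : ℕ} (hn : ∀ a, Nat.card {b // r a b} = n) :
    Nat.card α = Nat.card (Quot r) * n := by
  have : Fintype (Quot r) := Fintype.ofFinite _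
  have hfibre : ∀ c : Quot r, Nat.card {x // Quot.mk r x = c} = n := Quot.ind fun a ↦ by
    rw [← hn a]
    exact Nat.card_congr <| Equiv.subtypeEquivRight fun x ↦
      (hr.quot_mk_eq_iff x a).trans ⟨hr.symm, hr.symm⟩
  calc Nat.card α = Nat.card (Σ c : Quot r, {x // Quot.mk r x = c}) :=
        (Nat.card_congr (Equiv.sigmaFiberEquiv _)).symm
    _ = Nat.card (Quot r) * n := by
        rw [Nat.card_sigma, Finset.sum_congr rfl fun c _ ↦ hfibre c, Finset.sum_const,
          Finset.card_univ, smul_eq_mul, Nat.card_eq_fintype_card]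

section FiniteBase

variable {F K : Type*} [Field F] [Field K] [Algebra F K]

theorem algebraMap_mul_mem_range_iff (k : Fˣ) {x : K} :
    algebraMap F K k * x ∈ Set.range (algebraMap F K) ↔ x ∈ Set.range (algebraMap F K) := by
  refine ⟨fun ⟨c, hc⟩ ↦ ⟨k⁻¹ * c, ?_⟩, fun ⟨c, hc⟩ ↦ ⟨k * c, by rw [map_mul, hc]⟩⟩
  rw [map_mul, hc, ← mul_assoc, ← map_mul, Units.inv_mul, map_one, one_mul]

variable [Fintype F]

theorem algebraMap_pow_card_pow (e : F) (n : ℕ) :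
    algebraMap F K e ^ card F ^ n = algebraMap F K e := by
  rw [← map_pow, FiniteField.pow_card_pow]

theorem algebraMap_mul_pow_card_pow (e : F) (x : K) (n : ℕ) :
    (algebraMap F K e * x) ^ card F ^ n = algebraMap F K e * x ^ card F ^ n := by
  rw [mul_pow, algebraMap_pow_card_pow]

variable (F) in
theorem pow_card_pow_injective (n : ℕ) : Injective fun x : K ↦ x ^ card F ^ n := by
  have h : Injective ⇑(FiniteField.frobeniusAlgHom F K ^ n) := RingHom.injective (_ : K →+* K)
  rwa [AlgHom.coe_pow, FiniteField.coe_frobeniusAlgHom, pow_iterate] at h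

theorem mem_range_algebraMap_iff_pow_card_eq {x : K} :
    x ∈ Set.range (algebraMap F K) ↔ x ^ card F = x := by
  refine ⟨fun ⟨e, he⟩ ↦ he ▸ by rw [← map_pow, FiniteField.pow_card], fun hx ↦ ?_⟩
  -- `X ^ q - X` has all of `F` as roots, so its roots in `K` are the image of `F`.
  have hroots : (X ^ card F - X : F[X]).roots.map (algebraMap F K) =
      ((X ^ card F - X : F[X]).map (algebraMap F K)).roots :=
    roots_map_of_injective_of_card_eq_natDegree (algebraMap F K).injective <| by
      rw [FiniteField.roots_X_pow_card_sub_X,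
        FiniteField.X_pow_card_sub_X_natDegree_eq F Fintype.one_lt_card]
      rfl
  have hx : x ∈ ((X ^ card F - X : F[X]).map (algebraMap F K)).roots := by
    rw [mem_roots (by simpa using FiniteField.X_pow_card_sub_X_ne_zero K Fintype.one_lt_card)]
    simp [hx]
  obtain ⟨e, -, he⟩ := Multiset.mem_map.mp (hroots ▸ hx)
  exact ⟨e, he⟩

theorem algebraMap_mul_pow_card_pow_mem_range_iff (k : Fˣ) {x : K} (n : ℕ) :
    algebraMap F K k * x ^ card F ^ n ∈ Set.range (algebraMap F K) ↔
      x ∈ Set.range (algebraMap F K) := by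
  rw [algebraMap_mul_mem_range_iff, mem_range_algebraMap_iff_pow_card_eq,
    mem_range_algebraMap_iff_pow_card_eq, pow_right_comm, (pow_card_pow_injective F n).eq_iff]

theorem pow_card_pow_mul_eq_of_pow_card_pow_eq {a : K} {e : F} {d : ℕ}
    (h : a ^ card F ^ d = algebraMap F K e * a) (n : ℕ) :
    a ^ card F ^ (d * n) = algebraMap F K (e ^ n) * a := by
  induction n with
  | zero => simp
  | succ n ih =>
    rw [Nat.mul_succ, pow_add, pow_mul, ih, algebraMap_mul_pow_card_pow, h, ← mul_assoc,
      ← map_mul, ← pow_succ]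

theorem card_compl_range_algebraMap [Fintype K] :
    Nat.card {x : K // x ∉ Set.range (algebraMap F K)} = card K - card F := by
  classical
  rw [Nat.card_eq_fintype_card, Fintype.card_subtype_compl,
    Set.card_range_of_injective (algebraMap F K).injective]

end FiniteBase

theorem FiniteField.pow_pow_mod {K : Type*} [Field K] [Fintype K] {q m : ℕ}
    (hK : Fintype.card K = q ^ m) (x : K) (n : ℕ) : x ^ q ^ (n % m) = x ^ q ^ n := by
  conv_rhs => rw [← Nat.div_add_mod n m, pow_add, pow_mul, pow_mul, ← hK, pow_card_pow]

section Orbits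

variable {F K : Type*} [Field F] [Fintype F] [Field K] [Fintype K] [Algebra F K] {m : ℕ}

theorem mem_range_of_pow_card_pow_eq_self (hK : card K = card F ^ m) {d : ℕ}
    (hdm : d.Coprime m) {a : K} (ha : a ^ card F ^ d = a) : a ∈ Set.range (algebraMap F K) := by
  have hperiodic : ∀ n, IsPeriodicPt (· ^ card F) n a ↔ a ^ card F ^ n = a := fun n ↦ by
    rw [IsPeriodicPt, IsFixedPt, pow_iterate]
  have h := ((hperiodic d).2 ha).gcd ((hperiodic m).2 (by rw [← hK, FiniteField.pow_card]))
  rw [hdm, hperiodic, pow_one] at h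
  exact mem_range_algebraMap_iff_pow_card_eq.2 h

theorem mem_range_of_pow_card_pow_eq_algebraMap_mul (hK : card K = card F ^ m)
    (hmq : m.Coprime (card F - 1)) {d : ℕ} (hdm : d.Coprime m) {a : K} {e : F}
    (ha : a ^ card F ^ d = algebraMap F K e * a) : a ∈ Set.range (algebraMap F K) := by
  rcases eq_or_ne a 0 with rfl | ha0
  · exact ⟨0, map_zero _⟩
  have he0 : e ≠ 0 := by
    rintro rfl
    exact pow_ne_zero _ ha0 (by rw [ha, map_zero, zero_mul])
  have hem : e ^ m = 1 := by
    have h := pow_card_pow_mul_eq_of_pow_card_pow_eq ha m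
    rw [mul_comm, pow_mul, ← hK, FiniteField.pow_card_pow] at h
    exact (algebraMap F K).injective (by simpa using (mul_eq_right₀ ha0).1 h.symm)
  have he : e = 1 := by
    simpa [hmq] using pow_gcd_eq_one.2 ⟨hem, FiniteField.pow_card_sub_one_eq_one e he0⟩
  exact mem_range_of_pow_card_pow_eq_self hK hdm (by rw [ha, he, map_one, one_mul])

theorem eq_of_algebraMap_mul_eq_algebraMap_mul_pow_card_pow (hK : card K = card F ^ m)
    (hm : m.Prime) (hmq : m.Coprime (card F - 1)) {a : K} (ha : a ∉ Set.range (algebraMap F K))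
    {k k' : Fˣ} {d : ℕ} (hd : d < m)
    (h : algebraMap F K k * a = algebraMap F K k' * a ^ card F ^ d) : d = 0 ∧ k = k' := by
  obtain rfl | hd0 := Nat.eq_zero_or_pos d
  · have ha0 : a ≠ 0 := fun h ↦ ha ⟨0, h ▸ map_zero _⟩
    exact ⟨rfl, Units.ext <| (algebraMap F K).injective <|
      mul_right_cancel₀ ha0 (by simpa using h)⟩
  refine (ha <| mem_range_of_pow_card_pow_eq_algebraMap_mul hK hmq (e := (k'⁻¹ * k : Fˣ))
    ((hm.coprime_iff_not_dvd.2 (Nat.not_dvd_of_pos_of_lt hd0 hd)).symm) ?_).elim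
  rw [Units.val_mul, map_mul, mul_assoc, h, ← mul_assoc, ← map_mul, Units.inv_mul, map_one,
    one_mul]

theorem injective_algebraMap_mul_pow_card_pow (hK : card K = card F ^ m) (hm : m.Prime)
    (hmq : m.Coprime (card F - 1)) {a : K} (ha : a ∉ Set.range (algebraMap F K)) :
    Injective fun p : Fˣ × Fin m ↦ algebraMap F K p.1 * a ^ card F ^ (p.2 : ℕ) := by
  rintro ⟨k, i⟩ ⟨k', j⟩ h
  wlog hij : i ≤ j generalizing k k' i j
  · exact (this _ _ _ _ h.symm (le_of_not_ge hij)).symm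
  obtain ⟨d, hd⟩ := Nat.exists_eq_add_of_le (Fin.le_def.1 hij)
  have h' : algebraMap F K k * a = algebraMap F K k' * a ^ card F ^ d := by
    refine pow_card_pow_injective F i ?_
    simp only [algebraMap_mul_pow_card_pow, ← pow_mul, ← pow_add, add_comm d, ← hd]
    exact h
  obtain ⟨rfl, rfl⟩ := eq_of_algebraMap_mul_eq_algebraMap_mul_pow_card_pow hK hm hmq ha
    (by omega) h'
  exact Prod.ext rfl (Fin.ext hd.symm)

variable (F K m) in
def frobeniusScalarRel (a b : {x : K // x ∉ Set.range (algebraMap F K)}) : Prop :=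
  ∃ (k : Fˣ) (i : ℕ), i < m ∧ (b : K) = algebraMap F K k * (a : K) ^ card F ^ i

theorem equivalence_frobeniusScalarRel (hK : card K = card F ^ m) (hm : 0 < m) :
    Equivalence (frobeniusScalarRel F K m) where
  refl _ := ⟨1, 0, hm, by simp⟩
  symm := fun ⟨k, i, hi, hab⟩ ↦ ⟨k⁻¹, (m - i) % m, Nat.mod_lt _ hm, by
    rw [FiniteField.pow_pow_mod hK, hab, algebraMap_mul_pow_card_pow, ← pow_mul, ← pow_add,
      Nat.add_sub_cancel' hi.le, ← hK, FiniteField.pow_card, ← mul_assoc, ← map_mul,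
      Units.inv_mul, map_one, one_mul]⟩
  trans := fun ⟨k, i, _, hab⟩ ⟨l, j, _, hbc⟩ ↦ ⟨l * k, (i + j) % m, Nat.mod_lt _ hm, by
    rw [FiniteField.pow_pow_mod hK, hbc, hab, algebraMap_mul_pow_card_pow, ← pow_mul, ← pow_add,
      ← mul_assoc, ← map_mul, Units.val_mul]⟩

theorem card_frobeniusScalarRel (hK : card K = card F ^ m) (hm : m.Prime)
    (hmq : m.Coprime (card F - 1)) (a : {x : K // x ∉ Set.range (algebraMap F K)}) :
    Nat.card {b // frobeniusScalarRel F K m a b} = m * (card F - 1) := by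
  let f : Fˣ × Fin m → {b // frobeniusScalarRel F K m a b} := fun p ↦
    ⟨⟨algebraMap F K p.1 * a ^ card F ^ (p.2 : ℕ),
      (algebraMap_mul_pow_card_pow_mem_range_iff p.1 p.2).not.2 a.2⟩, p.1, p.2, p.2.2, rfl⟩
  have hf : Bijective f :=
    ⟨fun p p' h ↦ injective_algebraMap_mul_pow_card_pow hK hm hmq a.2 congr($h.1.1),
      fun ⟨_, k, i, hi, hb⟩ ↦ ⟨(k, ⟨i, hi⟩), Subtype.ext (Subtype.ext hb.symm)⟩⟩
  rw [← Nat.card_congr (Equiv.ofBijective f hf), Nat.card_prod, Nat.card_units,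
    Nat.card_eq_fintype_card, Nat.card_fin, mul_comm]

end Orbits

theorem stmt_8_general (q m : ℕ) (hm : m.Prime)
    (hdvd : ¬ m ∣ (q - 1))
    (F K : Type) [Field F] [Field K] [Fintype F] [Fintype K] [Algebra F K]
    (hF : Fintype.card F = q) (hK : Fintype.card K = q ^ m) :
    Nat.card (Quot (fun (a b : {x : K // x ∉ Set.range (algebraMap F K)}) =>
        ∃ (k : Fˣ) (i : ℕ), i < m ∧
          (b : K) = algebraMap F K (k : F) * (a : K) ^ (q ^ i))) =
      (q ^ m - q) / (m * (q - 1)) ∧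
    ∀ a : {x : K // x ∉ Set.range (algebraMap F K)},
      Nat.card {b : {x : K // x ∉ Set.range (algebraMap F K)} //
          ∃ (k : Fˣ) (i : ℕ), i < m ∧
            (b : K) = algebraMap F K (k : F) * (a : K) ^ (q ^ i)} =
        m * (q - 1) := by
  subst hF
  have hmq : m.Coprime (card F - 1) := hm.coprime_iff_not_dvd.2 hdvd
  have horbit := card_frobeniusScalarRel hK hm hmq
  refine ⟨?_, horbit⟩
  have hcount := (equivalence_frobeniusScalarRel hK hm.pos).card_eq_card_quot_mul horbit
  rw [card_compl_range_algebraMap, hK] at hcount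
  exact (Nat.div_eq_of_eq_mul_left (Nat.mul_pos hm.pos (Nat.sub_pos_of_lt Fintype.one_lt_card))
    hcount).symm

/-- For K = F_{q^m} ⊇ F = F_q with m prime, m ∤ (q-1): the relation
a ~ b iff b = k·σ^i(a) (k ∈ F^×, 0 ≤ i < m, σ the Frobenius x ↦ x^q) on
K \ F has exactly (q^m - q)/(m(q-1)) classes; equivalently each orbit has
exactly m(q-1) elements. -/
theorem stmt_8 (q m : ℕ) (hq : IsPrimePow q) (hm : m.Prime)
    (hdvd : ¬ m ∣ (q - 1))
    (F K : Type) [Field F] [Field K] [Fintype F] [Fintype K] [Algebra F K]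
    (hF : Fintype.card F = q) (hK : Fintype.card K = q ^ m) :
    Nat.card (Quot (fun (a b : {x : K // x ∉ Set.range (algebraMap F K)}) =>
        ∃ (k : Fˣ) (i : ℕ), i < m ∧
          (b : K) = algebraMap F K (k : F) * (a : K) ^ (q ^ i))) =
      (q ^ m - q) / (m * (q - 1)) ∧
    ∀ a : {x : K // x ∉ Set.range (algebraMap F K)},
      Nat.card {b : {x : K // x ∉ Set.range (algebraMap F K)} //
          ∃ (k : Fˣ) (i : ℕ), i < m ∧
            (b : K) = algebraMap F K (k : F) * (a : K) ^ (q ^ i)} =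
        m * (q - 1) :=
  stmt_8_general q m hm hdvd F K hF hK
end

section
/- Let K = F_{q^m} ⊇ F = F_q with m prime dividing q - 1. Then the equivalence relation on K \ F given by a ~ b iff b = k·σ^i(a) for some k ∈ F^×, 0 ≤ i ≤ m-1 (σ the q-power Frobenius) has exactly (m - 1) + (q^m - q - (q-1)(m-1))/(m(q-1)) equivalence classes. -/
/-!
The classes are the orbits of `Fˣ × Gal(K/F)` acting on `K \ F` by `(k, τ) • a = k τ(a)`, since
`Gal(K/F)` consists of the Frobenius powers `σ^i`, `i < m`. The stabiliser of `a` embeds into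
`Gal(K/F)` through its second component, so it has order `1` or `m`, and order `m` exactly when
`σ(a) ∈ Fˣ a`, i.e. when `a ^ (q - 1) ∈ Fˣ`, i.e. when `a ^ ((q - 1)^2) = 1`. Hence every orbit has
`m (q - 1)` or `q - 1` elements. In the cyclic group `Kˣ` the equation `x ^ ((q - 1)^2) = 1` has
`gcd (q^m - 1, (q - 1)^2) = m (q - 1)` solutions (as `m ∣ q - 1`), and `q - 1` of them lie in `F`;
so the small orbits cover `(m - 1)(q - 1)` elements of `K \ F` and the large ones the rest.
-/

open MulAction Module

namespace MulAction

variable {G α : Type*} [Group G] [MulAction G α] [Finite α]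

theorem card_subtype_card_orbit_eq (n : ℕ) :
    Nat.card {a : α // Nat.card (orbit G a) = n} =
      Nat.card {ω : orbitRel.Quotient G α // Nat.card ω.orbit = n} * n := by
  have : Fintype (orbitRel.Quotient G α) := Fintype.ofFinite _
  rw [← Nat.card_congr (Equiv.sigmaSubtypeFiberEquivSubtype Quotient.mk''
    (q := fun ω : orbitRel.Quotient G α => Nat.card ω.orbit = n)
    (fun a => by rw [orbitRel.Quotient.orbit_mk])), Nat.card_sigma]
  have hfiber (ω : {ω : orbitRel.Quotient G α // Nat.card ω.orbit = n}) :
      Nat.card {a // (Quotient.mk'' a : orbitRel.Quotient G α) = ω} = n := by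
    obtain ⟨ω, rfl⟩ := ω
    exact Nat.card_congr (Equiv.subtypeEquivRight fun a => orbitRel.Quotient.mem_orbit.symm)
  rw [Finset.sum_congr rfl fun ω _ => hfiber ω, Finset.sum_const, Finset.card_univ, smul_eq_mul,
    Nat.card_eq_fintype_card]

theorem card_orbitRel_quotient_eq_add (P : α → Prop) {s t : ℕ} (hs : s ≠ 0) (ht : t ≠ 0)
    (hst : s ≠ t) (hP : ∀ a, P a → Nat.card (orbit G a) = s)
    (hnP : ∀ a, ¬ P a → Nat.card (orbit G a) = t) :
    Nat.card (orbitRel.Quotient G α) =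
      Nat.card {a // P a} / s + (Nat.card α - Nat.card {a // P a}) / t := by
  classical
  have hPs : Nat.card {a // P a} = Nat.card {a : α // Nat.card (orbit G a) = s} :=
    Nat.card_congr <| Equiv.subtypeEquivRight fun a =>
      ⟨hP a, fun h => by_contra fun hna => hst (h.symm.trans (hnP a hna))⟩
  have hnPt : Nat.card {a // ¬ P a} = Nat.card {a : α // Nat.card (orbit G a) = t} :=
    Nat.card_congr <| Equiv.subtypeEquivRight fun a =>
      ⟨hnP a, fun h hpa => hst ((hP a hpa).symm.trans h)⟩
  have hnst : Nat.card {ω : orbitRel.Quotient G α // ¬ Nat.card ω.orbit = s} =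
      Nat.card {ω : orbitRel.Quotient G α // Nat.card ω.orbit = t} := by
    refine Nat.card_congr (Equiv.subtypeEquivRight fun ω => ?_)
    obtain ⟨a, rfl⟩ := Quotient.mk''_surjective ω
    rw [orbitRel.Quotient.orbit_mk]
    by_cases h : P a
    · simp [hP a h, hst]
    · simp [hnP a h, hst.symm]
  have hcompl : Nat.card α - Nat.card {a // P a} = Nat.card {a // ¬ P a} := by
    rw [← Nat.card_congr (Equiv.sumCompl P), Nat.card_sum, Nat.add_sub_cancel_left]
  rw [hcompl, hPs, hnPt, card_subtype_card_orbit_eq, card_subtype_card_orbit_eq,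
    Nat.mul_div_cancel _ (Nat.pos_of_ne_zero hs), Nat.mul_div_cancel _ (Nat.pos_of_ne_zero ht),
    ← hnst, ← Nat.card_sum, Nat.card_congr (Equiv.sumCompl _)]

end MulAction

open Finset in
theorem Nat.gcd_pow_sub_one_sub_one_sq {q m : ℕ} (hq : 1 ≤ q) (hm : m ∣ q - 1) :
    (q ^ m - 1).gcd ((q - 1) ^ 2) = m * (q - 1) := by
  have hgeom : q ^ m - 1 = (∑ i ∈ range m, q ^ i) * (q - 1) := by
    have := geom_sum_mul_add (q - 1) m
    rw [Nat.sub_add_cancel hq] at this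
    omega
  have hsum : ∑ i ∈ range m, q ^ i ≡ m [MOD q - 1] := by
    have hq1 : q ≡ 1 [MOD q - 1] := Nat.modEq_sub hq
    simpa using Nat.ModEq.sum (s := range m) fun i _ => hq1.pow i
  rw [hgeom, sq, Nat.gcd_mul_right, hsum.gcd_eq, Nat.gcd_eq_left hm]

namespace FiniteField

theorem card_pow_eq_one_eq_gcd {K : Type*} [Field K] [Finite K] {d : ℕ} (hd : d ≠ 0) :
    Nat.card {x : K // x ^ d = 1} = (Nat.card K - 1).gcd d := by
  have : NeZero d := ⟨hd⟩
  have hroots : rootsOfUnity d K = (powMonoidHom d : Kˣ →* Kˣ).ker := by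
    ext; simp [mem_rootsOfUnity]
  rw [← Nat.card_units, ← IsCyclic.card_powMonoidHom_ker, ← hroots,
    Nat.card_congr (rootsOfUnityEquivNthRoots K d)]
  exact Nat.card_congr <| Equiv.subtypeEquivRight fun x =>
    (Polynomial.mem_nthRoots (Nat.pos_of_ne_zero hd)).symm

variable (F : Type*) {K : Type*} [Field F] [Fintype F] [Field K] [Algebra F K]

def IsFrobeniusEigenvector (a : K) : Prop :=
  ∃ k : Fˣ, a ^ Fintype.card F = k • a

variable [Finite K]

theorem frobeniusAlgEquivOfAlgebraic_pow_apply (i : ℕ) (x : K) :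
    (frobeniusAlgEquivOfAlgebraic F K ^ i) x = x ^ Fintype.card F ^ i := by
  rw [AlgEquiv.coe_pow, coe_frobeniusAlgEquivOfAlgebraic_iterate]

variable {F}

theorem mem_range_algebraMap_iff_pow_card_eq_self {x : K} :
    x ∈ Set.range (algebraMap F K) ↔ x ^ Fintype.card F = x := by
  rw [IsGalois.mem_range_algebraMap_iff_fixed]
  refine ⟨fun h => h (frobeniusAlgEquivOfAlgebraic F K), fun h τ => ?_⟩
  obtain ⟨i, rfl⟩ := (bijective_frobeniusAlgEquivOfAlgebraic_pow F K).2 τ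
  rw [AlgEquiv.coe_pow]
  exact Function.iterate_fixed h _

theorem mem_range_algebraMap_iff_pow_card_sub_one_eq_one {x : K} (hx : x ≠ 0) :
    x ∈ Set.range (algebraMap F K) ↔ x ^ (Fintype.card F - 1) = 1 := by
  rw [mem_range_algebraMap_iff_pow_card_eq_self, ← pow_sub_one_mul Fintype.card_ne_zero,
    mul_eq_right₀ hx]

theorem isFrobeniusEigenvector_iff_pow_eq_one {x : K} (hx : x ≠ 0) :
    IsFrobeniusEigenvector F x ↔ x ^ ((Fintype.card F - 1) ^ 2) = 1 := by
  have hq : x ^ Fintype.card F = x ^ (Fintype.card F - 1) * x :=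
    (pow_sub_one_mul Fintype.card_ne_zero x).symm
  rw [sq, pow_mul, ← mem_range_algebraMap_iff_pow_card_sub_one_eq_one (pow_ne_zero _ hx),
    IsFrobeniusEigenvector, hq]
  constructor
  · rintro ⟨k, hk⟩
    exact ⟨k, mul_right_cancel₀ hx (by rw [hk, Units.smul_def, Algebra.smul_def])⟩
  · rintro ⟨c, hc⟩
    have hc0 : c ≠ 0 := by
      rintro rfl
      exact pow_ne_zero _ hx (by rw [← hc, map_zero])
    exact ⟨Units.mk0 c hc0, by rw [Units.smul_def, Units.val_mk0, Algebra.smul_def, hc]⟩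

end FiniteField

namespace ScaledGaloisAction

open FiniteField

variable {F K : Type*} [Field F] [Field K] [Algebra F K]

instance : MulAction (Fˣ × Gal(K/F)) K := MulAction.prodOfSMulCommClass _ _ _

theorem smul_eq_algebraMap_mul (g : Fˣ × Gal(K/F)) (x : K) :
    g • x = algebraMap F K g.1 * g.2 x := by
  rw [← Algebra.smul_def]
  rfl

theorem smul_mem_range_algebraMap {x : K} (hx : x ∈ Set.range (algebraMap F K))
    (g : Fˣ × Gal(K/F)) : g • x ∈ Set.range (algebraMap F K) := by
  obtain ⟨c, rfl⟩ := hx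
  exact ⟨g.1 * c, by rw [smul_eq_algebraMap_mul, AlgEquiv.commutes, map_mul]⟩

theorem ne_zero_of_notMem_range_algebraMap {x : K} (hx : x ∉ Set.range (algebraMap F K)) :
    x ≠ 0 := by
  rintro rfl
  exact hx ⟨0, map_zero _⟩

instance : MulAction (Fˣ × Gal(K/F)) {x : K // x ∉ Set.range (algebraMap F K)} where
  smul g a := ⟨g • (a : K), fun h => a.2 (by
    simpa only [inv_smul_smul] using smul_mem_range_algebraMap h g⁻¹)⟩
  one_smul a := Subtype.ext (one_smul _ (a : K))
  mul_smul g h a := Subtype.ext (mul_smul g h (a : K))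

theorem mem_orbit_subtype_iff {a b : {x : K // x ∉ Set.range (algebraMap F K)}} :
    b ∈ orbit (Fˣ × Gal(K/F)) a ↔ (b : K) ∈ orbit (Fˣ × Gal(K/F)) (a : K) := by
  simp only [mem_orbit_iff, Subtype.ext_iff]
  rfl

theorem stabilizer_subtype (a : {x : K // x ∉ Set.range (algebraMap F K)}) :
    stabilizer (Fˣ × Gal(K/F)) a = stabilizer (Fˣ × Gal(K/F)) (a : K) := by
  ext g
  exact Subtype.ext_iff

theorem injective_snd_comp_stabilizer_subtype {a : K} (ha : a ≠ 0) :
    Function.Injective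
      ((MonoidHom.snd Fˣ Gal(K/F)).comp (stabilizer (Fˣ × Gal(K/F)) a).subtype) := by
  rintro ⟨⟨k, τ⟩, hg⟩ ⟨⟨k', τ'⟩, hg'⟩ (rfl : τ = τ')
  rw [mem_stabilizer_iff, smul_eq_algebraMap_mul] at hg hg'
  have hk : algebraMap F K k = algebraMap F K k' :=
    mul_right_cancel₀ ((map_ne_zero τ).2 ha) (hg.trans hg'.symm)
  obtain rfl : k = k' := Units.ext ((algebraMap F K).injective hk)
  rfl

variable [Finite K]

theorem card_notMem_range_algebraMap :
    Nat.card {x : K // x ∉ Set.range (algebraMap F K)} = Nat.card K - Nat.card F := by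
  change Nat.card ↥(Set.range (algebraMap F K))ᶜ = _
  rw [Nat.card_coe_set_eq, Set.ncard_compl,
    Set.ncard_range_of_injective (algebraMap F K).injective]

theorem card_stabilizer_dvd_finrank {a : K} (ha : a ≠ 0) :
    Nat.card (stabilizer (Fˣ × Gal(K/F)) a) ∣ finrank F K :=
  IsGalois.card_aut_eq_finrank F K ▸
    Subgroup.card_dvd_of_injective _ (injective_snd_comp_stabilizer_subtype ha)

variable [Fintype F]

theorem mem_orbit_iff_exists_mul_pow {a b : K} :
    b ∈ orbit (Fˣ × Gal(K/F)) a ↔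
      ∃ (k : Fˣ) (i : ℕ), i < finrank F K ∧ b = algebraMap F K k * a ^ Fintype.card F ^ i := by
  rw [mem_orbit_iff]
  constructor
  · rintro ⟨⟨k, τ⟩, rfl⟩
    obtain ⟨i, rfl⟩ := (bijective_frobeniusAlgEquivOfAlgebraic_pow F K).2 τ
    exact ⟨k, i, i.2, by rw [smul_eq_algebraMap_mul, frobeniusAlgEquivOfAlgebraic_pow_apply]⟩
  · rintro ⟨k, i, -, rfl⟩
    exact ⟨(k, frobeniusAlgEquivOfAlgebraic F K ^ i),
      by rw [smul_eq_algebraMap_mul, frobeniusAlgEquivOfAlgebraic_pow_apply]⟩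

theorem card_stabilizer_of_isFrobeniusEigenvector (hn : (finrank F K).Prime) {a : K}
    (ha : a ≠ 0) (h : IsFrobeniusEigenvector F a) :
    Nat.card (stabilizer (Fˣ × Gal(K/F)) a) = finrank F K := by
  refine (hn.eq_one_or_self_of_dvd _ (card_stabilizer_dvd_finrank ha)).resolve_left ?_
  obtain ⟨k, hk⟩ := h
  rw [Subgroup.card_eq_one, Subgroup.eq_bot_iff_forall]
  intro hbot
  have hσ : (k⁻¹, frobeniusAlgEquivOfAlgebraic F K) ∈ stabilizer (Fˣ × Gal(K/F)) a :=
    inv_smul_eq_iff.2 hk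
  have hσ1 : frobeniusAlgEquivOfAlgebraic F K = 1 := congrArg Prod.snd (hbot _ hσ)
  exact hn.one_lt.ne' (orderOf_frobeniusAlgEquivOfAlgebraic F K ▸ orderOf_eq_one_iff.2 hσ1)

theorem card_stabilizer_of_not_isFrobeniusEigenvector (hn : (finrank F K).Prime) {a : K}
    (ha : a ≠ 0) (h : ¬ IsFrobeniusEigenvector F a) :
    Nat.card (stabilizer (Fˣ × Gal(K/F)) a) = 1 := by
  refine (hn.eq_one_or_self_of_dvd _ (card_stabilizer_dvd_finrank ha)).resolve_right
    fun hcard => h ?_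
  have hsurj := ((injective_snd_comp_stabilizer_subtype ha).bijective_of_nat_card_le
    (by rw [hcard, IsGalois.card_aut_eq_finrank])).2
  obtain ⟨⟨⟨k, τ⟩, hg⟩, rfl : τ = frobeniusAlgEquivOfAlgebraic F K⟩ :=
    hsurj (frobeniusAlgEquivOfAlgebraic F K)
  exact ⟨k⁻¹, eq_inv_smul_iff.2 hg⟩

theorem card_orbit_mul_card_stabilizer (a : {x : K // x ∉ Set.range (algebraMap F K)}) :
    Nat.card (orbit (Fˣ × Gal(K/F)) a) * Nat.card (stabilizer (Fˣ × Gal(K/F)) (a : K)) =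
      (Fintype.card F - 1) * finrank F K := by
  rw [← stabilizer_subtype, Nat.card_coe_set_eq, ← index_stabilizer, mul_comm,
    Subgroup.card_mul_index, Nat.card_prod, Nat.card_units, Nat.card_eq_fintype_card,
    IsGalois.card_aut_eq_finrank]

theorem card_orbit_of_isFrobeniusEigenvector (hn : (finrank F K).Prime)
    (a : {x : K // x ∉ Set.range (algebraMap F K)}) (h : IsFrobeniusEigenvector F (a : K)) :
    Nat.card (orbit (Fˣ × Gal(K/F)) a) = Fintype.card F - 1 := by
  have := card_orbit_mul_card_stabilizer a
  rw [card_stabilizer_of_isFrobeniusEigenvector hn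
    (ne_zero_of_notMem_range_algebraMap a.2) h] at this
  exact Nat.eq_of_mul_eq_mul_right hn.pos this

theorem card_orbit_of_not_isFrobeniusEigenvector (hn : (finrank F K).Prime)
    (a : {x : K // x ∉ Set.range (algebraMap F K)}) (h : ¬ IsFrobeniusEigenvector F (a : K)) :
    Nat.card (orbit (Fˣ × Gal(K/F)) a) = (Fintype.card F - 1) * finrank F K := by
  rw [← card_orbit_mul_card_stabilizer a, card_stabilizer_of_not_isFrobeniusEigenvector hn
    (ne_zero_of_notMem_range_algebraMap a.2) h, mul_one]

theorem card_isFrobeniusEigenvector_notMem_range :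
    Nat.card {a : {x : K // x ∉ Set.range (algebraMap F K)} //
        IsFrobeniusEigenvector F (a : K)} =
      (Nat.card K - 1).gcd ((Fintype.card F - 1) ^ 2) -
        (Nat.card K - 1).gcd (Fintype.card F - 1) := by
  have hq : Fintype.card F - 1 ≠ 0 := Nat.sub_ne_zero_of_lt Fintype.one_lt_card
  have hset : {x : K | x ∉ Set.range (algebraMap F K) ∧ IsFrobeniusEigenvector F x} =
      {x : K | x ^ ((Fintype.card F - 1) ^ 2) = 1} \ {x : K | x ^ (Fintype.card F - 1) = 1} := by
    ext x
    rcases eq_or_ne x 0 with rfl | hx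
    · simp [zero_pow (pow_ne_zero 2 hq)]
    · simp only [Set.mem_ofPred_eq, Set.mem_sdiff,
        mem_range_algebraMap_iff_pow_card_sub_one_eq_one hx,
        isFrobeniusEigenvector_iff_pow_eq_one hx]
      tauto
  have hsub : {x : K | x ^ (Fintype.card F - 1) = 1} ⊆
      {x : K | x ^ ((Fintype.card F - 1) ^ 2) = 1} :=
    fun x (hx : _ = 1) => by rw [Set.mem_ofPred_eq, sq, pow_mul, hx, one_pow]
  have hcard {d : ℕ} (hd : d ≠ 0) : {x : K | x ^ d = 1}.ncard = (Nat.card K - 1).gcd d := by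
    rw [← Nat.card_coe_set_eq]
    exact card_pow_eq_one_eq_gcd hd
  rw [Nat.card_congr (Equiv.subtypeSubtypeEquivSubtypeInter (· ∉ Set.range (algebraMap F K))
    (IsFrobeniusEigenvector F))]
  change Nat.card ↥{x : K | _} = _
  rw [hset, Nat.card_coe_set_eq, Set.ncard_sdiff hsub, hcard (pow_ne_zero 2 hq), hcard hq]

end ScaledGaloisAction

open FiniteField ScaledGaloisAction

theorem stmt_9_general (q m : ℕ) (hm : m.Prime)
    (hdvd : m ∣ (q - 1))
    (F K : Type) [Field F] [Field K] [Fintype F] [Fintype K] [Algebra F K]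
    (hF : Fintype.card F = q) (hK : Fintype.card K = q ^ m) :
    Nat.card (Quot (fun (a b : {x : K // x ∉ Set.range (algebraMap F K)}) =>
        ∃ (k : Fˣ) (i : ℕ), i < m ∧
          (b : K) = algebraMap F K (k : F) * (a : K) ^ (q ^ i))) =
      (m - 1) + (q ^ m - q - (q - 1) * (m - 1)) / (m * (q - 1)) := by
  subst hF
  have hq1 : Fintype.card F - 1 ≠ 0 := Nat.sub_ne_zero_of_lt Fintype.one_lt_card
  obtain rfl : finrank F K = m :=
    Nat.pow_right_injective Fintype.one_lt_card (hK ▸ card_eq_pow_finrank (K := F) (V := K)).symm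
  have hrel : (fun (a b : {x : K // x ∉ Set.range (algebraMap F K)}) =>
      ∃ (k : Fˣ) (i : ℕ), i < finrank F K ∧
        (b : K) = algebraMap F K (k : F) * (a : K) ^ (Fintype.card F ^ i)) =
      orbitRel (Fˣ × Gal(K/F)) _ := by
    funext a b
    rw [orbitRel_apply, mem_orbit_symm, mem_orbit_subtype_iff, mem_orbit_iff_exists_mul_pow]
  rw [hrel]
  change Nat.card (orbitRel.Quotient (Fˣ × Gal(K/F)) _) = _
  rw [card_orbitRel_quotient_eq_add _ hq1 (mul_ne_zero hq1 hm.ne_zero)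
      (lt_mul_of_one_lt_right (Nat.pos_of_ne_zero hq1) hm.one_lt).ne
      (card_orbit_of_isFrobeniusEigenvector hm) (card_orbit_of_not_isFrobeniusEigenvector hm),
    card_isFrobeniusEigenvector_notMem_range, card_notMem_range_algebraMap,
    Nat.card_eq_fintype_card, Nat.card_eq_fintype_card (α := F), hK,
    Nat.gcd_pow_sub_one_sub_one_sq Fintype.card_pos hdvd,
    Nat.gcd_eq_right (Nat.sub_one_dvd_pow_sub_one _ _), ← Nat.sub_one_mul,
    Nat.mul_div_cancel _ (Nat.pos_of_ne_zero hq1), mul_comm (Fintype.card F - 1),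
    mul_comm (finrank F K - 1)]

/-- For K = F_{q^m} ⊇ F = F_q with m prime, m ∣ (q-1): the relation
a ~ b iff b = k·σ^i(a) (k ∈ F^×, 0 ≤ i < m) on K \ F has exactly
(m-1) + (q^m - q - (q-1)(m-1))/(m(q-1)) equivalence classes. -/
theorem stmt_9 (q m : ℕ) (hq : IsPrimePow q) (hm : m.Prime)
    (hdvd : m ∣ (q - 1))
    (F K : Type) [Field F] [Field K] [Fintype F] [Fintype K] [Algebra F K]
    (hF : Fintype.card F = q) (hK : Fintype.card K = q ^ m) :
    Nat.card (Quot (fun (a b : {x : K // x ∉ Set.range (algebraMap F K)}) =>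
        ∃ (k : Fˣ) (i : ℕ), i < m ∧
          (b : K) = algebraMap F K (k : F) * (a : K) ^ (q ^ i))) =
      (m - 1) + (q ^ m - q - (q - 1) * (m - 1)) / (m * (q - 1)) :=
  stmt_9_general q m hm hdvd F K hF hK
end

section
/- Let K = F_{q^m} ⊇ F = F_q with σ the q-power Frobenius, m prime dividing q - 1, and write K = F(d) with d^m = c ∈ F^×. If a ∈ K \ F satisfies σ^i(a) = k·a for some 1 ≤ i ≤ m-1 and k ∈ F^×, then a = λ·d^j for some λ ∈ F^× and 1 ≤ j ≤ m-1. -/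
/-!
Let `σ` be the `q`-power Frobenius of `K/F`. Since `d ^ (q - 1) = c ^ ((q - 1) / m)`, the
generator `d` is an eigenvector of `σ` whose eigenvalue `ζ = c ^ ((q - 1) / m)` is a primitive
`m`-th root of unity (it is not `1`, as `d ∉ F`). As `i` is prime to `m`, `ζ ^ i` is again
primitive, so the eigenvalues `ζ ^ (i * j)` of `σ ^ i` on the powers `d ^ j`, `j < m`, run through
all `m`-th roots of unity, and the eigenvalue `k` of `a` is one of them because `σ ^ (i * m) = 1`.
Then `a / d ^ j` is fixed by `σ ^ i` and by `σ ^ m = 1`, hence by `σ ^ gcd(i, m) = σ`, so it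
lies in `F`.
-/

open Module

namespace AlgHom

variable {R A : Type*} [CommSemiring R] [Semiring A] [Algebra R A]

theorem pow_apply_eq_pow_smul_of_apply_eq_smul (φ : A →ₐ[R] A) {r : R} {a : A}
    (h : φ a = r • a) (n : ℕ) : (φ ^ n) a = r ^ n • a := by
  induction n with
  | zero => simp
  | succ n ih => rw [pow_succ, mul_apply, h, map_smul, ih, smul_smul, pow_succ']

theorem apply_div_eq_self_of_apply_eq_smul {F L : Type*} [Field F] [Field L] [Algebra F L]
    (φ : L →ₐ[F] L) {r : F} (hr : r ≠ 0) {a b : L} (ha : φ a = r • a)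
    (hb : φ b = r • b) : φ (a / b) = a / b := by
  rw [map_div₀, ha, hb, Algebra.smul_def, Algebra.smul_def,
    mul_div_mul_left _ _ ((map_ne_zero _).2 hr)]

end AlgHom

namespace FiniteField

variable {F K : Type*} [Field F] [Fintype F]

theorem mem_range_algebraMap_of_pow_card_eq_self [CommRing K] [IsDomain K] [Algebra F K]
    {x : K} (hx : x ^ Fintype.card F = x) : x ∈ Set.range (algebraMap F K) := by
  refine (Polynomial.splits_X_pow_nat_card_sub_X (K := F)).mem_range_of_isRoot
    (X_pow_card_sub_X_ne_zero F ?_) ?_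
  · rw [Nat.card_eq_fintype_card]; exact Fintype.one_lt_card
  · simp [Nat.card_eq_fintype_card, hx]

variable [Field K] [Algebra F K]

theorem frobeniusAlgHom_pow_apply (n : ℕ) (x : K) :
    (frobeniusAlgHom F K ^ n) x = x ^ Fintype.card F ^ n := by
  rw [AlgHom.coe_pow, coe_frobeniusAlgHom, pow_iterate]

theorem mem_range_algebraMap_of_frobeniusAlgHom_pow_apply_eq_self [Finite K] {i : ℕ}
    (hi : i.Coprime (finrank F K)) {x : K} (hx : (frobeniusAlgHom F K ^ i) x = x) :
    x ∈ Set.range (algebraMap F K) := by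
  have hxi : Function.IsPeriodicPt (frobeniusAlgHom F K) i x := by
    rwa [Function.IsPeriodicPt, Function.IsFixedPt, ← AlgHom.coe_pow]
  have hxrank : Function.IsPeriodicPt (frobeniusAlgHom F K) (finrank F K) x := by
    rw [Function.IsPeriodicPt, Function.IsFixedPt, ← AlgHom.coe_pow,
      ← orderOf_frobeniusAlgHom, pow_orderOf_eq_one, AlgHom.one_apply]
  have hx1 := hxi.gcd hxrank
  rw [hi.gcd_eq_one] at hx1
  exact mem_range_algebraMap_of_pow_card_eq_self hx1

theorem frobeniusAlgHom_apply_eq_smul_of_pow_eq_algebraMap {m : ℕ}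
    (hm : m ∣ Fintype.card F - 1) {d : K} {c : F} (hd : d ^ m = algebraMap F K c) :
    frobeniusAlgHom F K d = c ^ ((Fintype.card F - 1) / m) • d := by
  rw [coe_frobeniusAlgHom, Algebra.smul_def, map_pow, ← hd, ← pow_mul,
    Nat.mul_div_cancel' hm, ← pow_succ, Nat.sub_add_cancel Fintype.card_pos]

theorem isPrimitiveRoot_of_pow_eq_algebraMap {m : ℕ} [Fact m.Prime]
    (hm : m ∣ Fintype.card F - 1) {d : K} {c : F} (hc : c ≠ 0) (hd : d ^ m = algebraMap F K c)
    (hdF : d ∉ Set.range (algebraMap F K)) :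
    IsPrimitiveRoot (c ^ ((Fintype.card F - 1) / m)) m := by
  refine IsPrimitiveRoot.iff_orderOf.2 (orderOf_eq_prime ?_ fun h ↦ hdF ?_)
  · rw [← pow_mul, Nat.div_mul_cancel hm, pow_card_sub_one_eq_one c hc]
  · have hσd := frobeniusAlgHom_apply_eq_smul_of_pow_eq_algebraMap hm hd
    rw [h, one_smul] at hσd
    exact mem_range_algebraMap_of_pow_card_eq_self hσd

theorem exists_eq_smul_pow_of_frobeniusAlgHom_pow_apply_eq_smul [Finite K] {m i : ℕ}
    [NeZero m] (hrank : finrank F K = m) (hi : i.Coprime m) {ζ : F} (hζ : IsPrimitiveRoot ζ m)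
    {d : K} (hd0 : d ≠ 0) (hd : frobeniusAlgHom F K d = ζ • d) {a : K} (ha0 : a ≠ 0) {k : F}
    (ha : (frobeniusAlgHom F K ^ i) a = k • a) :
    ∃ lam : F, ∃ j < m, a = lam • d ^ j := by
  set τ := frobeniusAlgHom F K ^ i
  have hτm : τ ^ m = 1 := by
    rw [← pow_mul, mul_comm, pow_mul, ← hrank, ← orderOf_frobeniusAlgHom, pow_orderOf_eq_one,
      one_pow]
  have hkm : k ^ m = 1 := by
    refine smul_left_injective F ha0 ?_
    simp only [one_smul, ← τ.pow_apply_eq_pow_smul_of_apply_eq_smul ha, hτm, AlgHom.one_apply]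
  obtain ⟨j, hjm, hj⟩ := (hζ.pow_of_coprime i hi).eq_pow_of_pow_eq_one hkm
  have hτd : τ (d ^ j) = k • d ^ j := by
    rw [map_pow, AlgHom.pow_apply_eq_pow_smul_of_apply_eq_smul _ hd, smul_pow, hj]
  have hk : k ≠ 0 := by rintro rfl; simp [zero_pow (NeZero.ne m)] at hkm
  obtain ⟨lam, hlam⟩ := mem_range_algebraMap_of_frobeniusAlgHom_pow_apply_eq_self (hrank ▸ hi)
    (τ.apply_div_eq_self_of_apply_eq_smul hk ha hτd)
  exact ⟨lam, j, hjm, by rw [Algebra.smul_def, hlam, div_mul_cancel₀ _ (pow_ne_zero _ hd0)]⟩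

end FiniteField

open FiniteField in
theorem stmt_10_general (q m : ℕ) (hm : m.Prime)
    (hdvd : m ∣ (q - 1))
    (F K : Type) [Field F] [Field K] [Fintype F] [Fintype K] [Algebra F K]
    (hF : Fintype.card F = q) (hK : Fintype.card K = q ^ m)
    (d : K) (c : F) (hc : c ≠ 0) (hd : d ^ m = algebraMap F K c)
    (hadj : Algebra.adjoin F ({d} : Set K) = ⊤)
    (a : K) (ha : a ∉ Set.range (algebraMap F K))
    (i : ℕ) (hi1 : 1 ≤ i) (hi2 : i ≤ m - 1)
    (k : F) (hka : a ^ (q ^ i) = algebraMap F K k * a) :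
    ∃ (lam : F) (j : ℕ), lam ≠ 0 ∧ 1 ≤ j ∧ j ≤ m - 1 ∧
      a = algebraMap F K lam * d ^ j := by
  subst hF
  have : Fact m.Prime := ⟨hm⟩
  have hrank : finrank F K = m :=
    Nat.pow_right_injective Fintype.one_lt_card ((card_eq_pow_finrank (K := F)).symm.trans hK)
  have hi : i.Coprime m :=
    (hm.coprime_iff_not_dvd.2 (Nat.not_dvd_of_pos_of_lt hi1 (by omega))).symm
  have hdF : d ∉ Set.range (algebraMap F K) := fun hdF ↦ ha <| Algebra.mem_bot.1 <|
    (hadj ▸ Algebra.adjoin_le (Set.singleton_subset_iff.2 (Algebra.mem_bot.2 hdF)) :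
      (⊤ : Subalgebra F K) ≤ ⊥) Algebra.mem_top
  have hd0 : d ≠ 0 := fun h ↦ hdF ⟨0, by rw [map_zero, h]⟩
  have ha0 : a ≠ 0 := fun h ↦ ha ⟨0, by rw [map_zero, h]⟩
  have haσ : (frobeniusAlgHom F K ^ i) a = k • a := by
    rw [frobeniusAlgHom_pow_apply, hka, Algebra.smul_def]
  obtain ⟨lam, j, hjm, rfl⟩ := exists_eq_smul_pow_of_frobeniusAlgHom_pow_apply_eq_smul hrank hi
    (isPrimitiveRoot_of_pow_eq_algebraMap hdvd hc hd hdF) hd0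
    (frobeniusAlgHom_apply_eq_smul_of_pow_eq_algebraMap hdvd hd) ha0 haσ
  refine ⟨lam, j, ?_, ?_, by omega, Algebra.smul_def _ _⟩
  · rintro rfl; exact ha0 (zero_smul _ _)
  · by_contra! hj
    exact ha ⟨lam, by simp [Nat.lt_one_iff.1 hj, Algebra.smul_def]⟩

/-- Let K = F_{q^m} = F(d), d a root of irreducible t^m - c ∈ F[t], m prime
dividing q - 1, σ the Frobenius x ↦ x^q.  If a ∈ K \ F satisfies
σ^i(a) = k·a for some 1 ≤ i ≤ m-1 and k ∈ F^×, then a = λ·d^j for some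
λ ∈ F^× and 1 ≤ j ≤ m-1. -/
theorem stmt_10 (q m : ℕ) (hq : IsPrimePow q) (hm : m.Prime)
    (hdvd : m ∣ (q - 1))
    (F K : Type) [Field F] [Field K] [Fintype F] [Fintype K] [Algebra F K]
    (hF : Fintype.card F = q) (hK : Fintype.card K = q ^ m)
    (d : K) (c : F) (hc : c ≠ 0) (hd : d ^ m = algebraMap F K c)
    (hirr : Irreducible (Polynomial.X ^ m - Polynomial.C c))
    (hadj : Algebra.adjoin F ({d} : Set K) = ⊤)
    (a : K) (ha : a ∉ Set.range (algebraMap F K))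
    (i : ℕ) (hi1 : 1 ≤ i) (hi2 : i ≤ m - 1)
    (k : F) (hk : k ≠ 0) (hka : a ^ (q ^ i) = algebraMap F K k * a) :
    ∃ (lam : F) (j : ℕ), lam ≠ 0 ∧ 1 ≤ j ∧ j ≤ m - 1 ∧
      a = algebraMap F K lam * d ^ j :=
  stmt_10_general q m hm hdvd F K hF hK d c hc hd hadj a ha i hi1 hi2 k hka
end
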